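/- Let Z be a compact Hausdorff space and h_1, …, h_k : Z → Z pairwise commuting surjective local homeomorphisms, with β_{c_i} := limsup_{j→∞} j^{-1} ln( max_{z∈Z} |h_i^{-j}(z)| ). Let r ∈ (0,∞)^k and fix β_0 ∈ (0,∞) with β_0 r_i > β_{c_i} for all i. Then for every z ∈ Z, f_β(z) := Σ_{n∈ℕ^k} e^{-β r·n} |h^{-n}(z)| → 1 as β → ∞; moreover for every Borel probability measure ε on Z, ∫_Z f_β dε → 1 as β → ∞. -/

import Mathlib

open Filter MeasureTheory

/-- `h^m = h 0 ^[m 0] ∘ ⋯ ∘ h (k-1) ^[m (k-1)]`. -/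
def compIter {Z : Type*} {k : ℕ} (h : Fin k → Z → Z) (m : Fin k → ℕ) : Z → Z :=
  (List.ofFn fun i => (h i)^[m i]).foldr (· ∘ ·) id

/-- The critical inverse temperature
`β_c = limsup_{j→∞} j⁻¹ ln (max_z |f^{-j}(z)|)` of a map `f : Z → Z`. -/
noncomputable def betaC {Z : Type*} (f : Z → Z) : ℝ :=
  Filter.limsup
    (fun j : ℕ => Real.log (⨆ z : Z, (Nat.card ((f^[j]) ⁻¹' {z}) : ℝ)) / j)
    Filter.atTop

/-!
A locally injective self-map of a compact space has uniformly bounded fibres, so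
`|h_i^{-j}(z)|` grows at most exponentially in `j`, and `β₀ r_i > β_{c_i}` sharpens this to
`|h_i^{-j}(z)| ≤ C_i e^{β₀ r_i j}` for all `j` and `z`. Fibre cardinalities are submultiplicative
under composition, hence `|h^{-n}(z)| ≤ C e^{β₀ r·n}`, and for `β ≥ β₀ + 1` the `n`-th term of
`f_β(z)` is at most `C e^{-r·n}`, uniformly in `z`. Dominated convergence then kills every term
with `n ≠ 0` and leaves the term `n = 0`, which is `1`. The same bound dominates `f_β`, which is
measurable since fibre cardinalities of a local homeomorphism of a compact Hausdorff space are
lower semicontinuous, so dominated convergence for integrals gives the second claim.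
-/

open Real Topology

section FiberCardinality

variable {X Y W : Type*}

theorem natCard_preimage_comp_le {f : X → Y} {g : Y → W} {z : W} (hg : (g ⁻¹' {z}).Finite)
    {a b : ℝ} (ha : (Nat.card (g ⁻¹' {z}) : ℝ) ≤ a)
    (hb : ∀ y, (Nat.card (f ⁻¹' {y}) : ℝ) ≤ b) (hb₀ : 0 ≤ b) :
    (Nat.card ((g ∘ f) ⁻¹' {z}) : ℝ) ≤ a * b := by
  classical
  simp only [Nat.card_coe_set_eq] at *
  have hunion : (g ∘ f) ⁻¹' {z} = ⋃ y ∈ hg.toFinset, f ⁻¹' {y} := by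
    rw [Finset.set_biUnion_preimage_singleton, hg.coe_toFinset, Set.preimage_comp]
  calc (((g ∘ f) ⁻¹' {z}).ncard : ℝ)
      ≤ ∑ y ∈ hg.toFinset, ((f ⁻¹' {y}).ncard : ℝ) := by
        rw [hunion]; exact_mod_cast hg.toFinset.set_ncard_biUnion_le _
    _ ≤ hg.toFinset.card * b := by
        simpa using Finset.sum_le_card_nsmul _ _ _ fun y _ => hb y
    _ ≤ a * b := by
        rw [← Set.ncard_eq_toFinset_card _ hg]; exact mul_le_mul_of_nonneg_right ha hb₀

theorem natCard_preimage_iterate_le {f : X → X} (hfin : ∀ x, (f ⁻¹' {x}).Finite) {N : ℝ}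
    (hN : ∀ x, (Nat.card (f ⁻¹' {x}) : ℝ) ≤ N) (n : ℕ) (x : X) :
    (Nat.card (f^[n] ⁻¹' {x}) : ℝ) ≤ N ^ n := by
  induction n generalizing x with
  | zero => simp
  | succ n ih =>
    rw [Function.iterate_succ', pow_succ']
    exact natCard_preimage_comp_le (hfin x) (hN x) ih <|
      pow_nonneg ((Nat.cast_nonneg _).trans (hN x)) n

end FiberCardinality

section Topology

variable {X Y : Type*} [TopologicalSpace X]

theorem IsLocallyInjective.exists_encard_preimage_le [CompactSpace X] {f : X → Y}
    (hf : IsLocallyInjective f) : ∃ N : ℕ, ∀ y, (f ⁻¹' {y}).encard ≤ N := by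
  choose U hUo hxU hUinj using hf
  obtain ⟨t, ht⟩ := isCompact_univ.elim_finite_subcover U hUo fun x _ => Set.mem_iUnion.2 ⟨x, hxU x⟩
  have hcover : ∀ x, ∃ c ∈ t, x ∈ U c := fun x => by simpa using ht (Set.mem_univ x)
  choose! c hct hxc using hcover
  refine ⟨t.card, fun y => ?_⟩
  rw [← Set.encard_coe_eq_coe_finsetCard]
  refine Set.encard_le_encard_of_injOn (fun x _ => hct x) fun x hx x' hx' hcc => ?_
  exact hUinj (c x) (hxc x) (hcc ▸ hxc x') (hx.trans hx'.symm)

theorem IsLocallyInjective.finite_preimage_singleton [CompactSpace X] {f : X → Y}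
    (hf : IsLocallyInjective f) (y : Y) : (f ⁻¹' {y}).Finite :=
  have ⟨_, hN⟩ := hf.exists_encard_preimage_le
  Set.finite_of_encard_le_coe (hN y)

theorem IsLocallyInjective.exists_natCard_preimage_le [CompactSpace X] {f : X → Y}
    (hf : IsLocallyInjective f) : ∃ N : ℕ, ∀ y, Nat.card (f ⁻¹' {y}) ≤ N := by
  obtain ⟨N, hN⟩ := hf.exists_encard_preimage_le
  refine ⟨N, fun y => ?_⟩
  rw [Nat.card_coe_set_eq, ← ENat.natCast_le_natCast,
    (hf.finite_preimage_singleton y).cast_ncard_eq]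
  exact hN y

variable [TopologicalSpace Y]

theorem IsOpenMap.eventually_encard_preimage_le [T2Space X] {f : X → Y} (hf : IsOpenMap f)
    {y₀ : Y} (hy₀ : (f ⁻¹' {y₀}).Finite) :
    ∀ᶠ y in 𝓝 y₀, (f ⁻¹' {y₀}).encard ≤ (f ⁻¹' {y}).encard := by
  -- Near `y₀`, each of the disjoint open neighbourhoods `U x` of the points `x` of the fibre
  -- still meets the fibre over `y`, since `f '' U x` is a neighbourhood of `y₀`.
  obtain ⟨U, hU, hdisj⟩ := hy₀.t2_separation
  have hV : ∀ x ∈ f ⁻¹' {y₀}, f '' U x ∈ 𝓝 y₀ := fun x hx =>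
    hx ▸ hf.image_mem_nhds ((hU x).2.mem_nhds (hU x).1)
  filter_upwards [(Filter.biInter_mem hy₀).2 hV] with y hy
  have hlift : ∀ x ∈ f ⁻¹' {y₀}, ∃ x' ∈ U x, f x' = y := fun x hx => Set.mem_iInter₂.1 hy x hx
  choose! g hgU hgy using hlift
  exact Set.encard_le_encard_of_injOn (fun x hx => hgy x hx) fun x hx x' hx' hgg =>
    hdisj.elim hx hx' (Set.not_disjoint_iff.2 ⟨g x, hgU x hx, hgg ▸ hgU x' hx'⟩)

theorem IsOpenMap.lowerSemicontinuous_natCard_preimage [T2Space X] {f : X → Y}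
    (hf : IsOpenMap f) (hfin : ∀ y, (f ⁻¹' {y}).Finite) :
    LowerSemicontinuous fun y => (Nat.card (f ⁻¹' {y}) : ℝ) := by
  intro y₀ c hc
  filter_upwards [hf.eventually_encard_preimage_le (hfin y₀)] with y hy
  rw [← (hfin y₀).cast_ncard_eq, ← (hfin y).cast_ncard_eq, ENat.natCast_le_natCast] at hy
  simp only [Nat.card_coe_set_eq] at hc ⊢
  exact hc.trans_le (by exact_mod_cast hy)

theorem IsLocalHomeomorph.measurable_natCard_preimage [CompactSpace X] [T2Space X]
    [MeasurableSpace Y] [OpensMeasurableSpace Y] {f : X → Y} (hf : IsLocalHomeomorph f) :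
    Measurable fun y => (Nat.card (f ⁻¹' {y}) : ℝ) :=
  (hf.isOpenMap.lowerSemicontinuous_natCard_preimage
    hf.isLocallyInjective.finite_preimage_singleton).measurable

theorem IsLocalHomeomorph.iterate {f : X → X} (hf : IsLocalHomeomorph f) :
    ∀ n, IsLocalHomeomorph f^[n]
  | 0 => (Homeomorph.refl X).isLocalHomeomorph
  | n + 1 => (hf.iterate n).comp hf

end Topology

section Growth

variable {X : Type*}

theorem eventually_iSup_natCard_preimage_iterate_le_exp {f : X → X} {N : ℕ}
    (hN : ∀ j x, (Nat.card (f^[j] ⁻¹' {x}) : ℝ) ≤ N ^ j) {b : ℝ} (hb : betaC f < b) :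
    ∀ᶠ j : ℕ in atTop, ⨆ x, (Nat.card (f^[j] ⁻¹' {x}) : ℝ) ≤ exp (b * j) := by
  set S : ℕ → ℝ := fun j => ⨆ x, (Nat.card (f^[j] ⁻¹' {x}) : ℝ)
  have hS₀ : ∀ j, 0 ≤ S j := fun j => Real.iSup_nonneg fun _ => Nat.cast_nonneg _
  have hSN : ∀ j, S j ≤ N ^ j := fun j => Real.iSup_le (hN j) (by positivity)
  have hlog : ∀ j, log (S j) ≤ j * log N := fun j => by
    rcases (hS₀ j).eq_or_lt with h | h
    · rw [← h, log_zero]; exact mul_nonneg j.cast_nonneg (log_natCast_nonneg N)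
    · exact (log_le_log h (hSN j)).trans_eq (log_pow (N : ℝ) j)
  have hbdd : IsBoundedUnder (· ≤ ·) atTop fun j : ℕ => log (S j) / j :=
    isBoundedUnder_of ⟨log N, fun j => div_le_of_le_mul₀ j.cast_nonneg (log_natCast_nonneg N)
      ((hlog j).trans_eq (mul_comm _ _))⟩
  filter_upwards [eventually_lt_of_limsup_lt hb hbdd, eventually_gt_atTop 0] with j hj hj₀
  rw [div_lt_iff₀ (by exact_mod_cast hj₀)] at hj
  exact (le_exp_log (S j)).trans (exp_le_exp.2 (by linarith))

theorem exists_natCard_preimage_iterate_le_mul_exp {f : X → X} {N : ℕ}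
    (hN : ∀ j x, (Nat.card (f^[j] ⁻¹' {x}) : ℝ) ≤ N ^ j) {b : ℝ} (hb : betaC f < b) :
    ∃ C > 0, ∀ j x, (Nat.card (f^[j] ⁻¹' {x}) : ℝ) ≤ C * exp (b * j) := by
  have hbdd : ∀ j, BddAbove (Set.range fun x => (Nat.card (f^[j] ⁻¹' {x}) : ℝ)) :=
    fun j => ⟨N ^ j, Set.forall_mem_range.2 (hN j)⟩
  have hO : (fun j : ℕ => ⨆ x, (Nat.card (f^[j] ⁻¹' {x}) : ℝ)) =O[atTop] fun j => exp (b * j) :=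
    .of_norm_eventuallyLE <| (eventually_iSup_natCard_preimage_iterate_le_exp hN hb).mono
      fun j hj => (Real.norm_of_nonneg (Real.iSup_nonneg fun _ => Nat.cast_nonneg _)).trans_le hj
  obtain ⟨C, hC, hCb⟩ := Asymptotics.bound_of_isBigO_nat_atTop hO
  refine ⟨C, hC, fun j x => ?_⟩
  have hCj := hCb (exp_pos (b * j)).ne'
  rw [Real.norm_of_nonneg (exp_pos _).le] at hCj
  exact (le_ciSup (hbdd j) x).trans ((le_abs_self _).trans hCj)

end Growth

section CompIter

variable {Z : Type*} {k : ℕ}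

theorem compIter_succ (h : Fin (k + 1) → Z → Z) (n : Fin (k + 1) → ℕ) :
    compIter h n = (h 0)^[n 0] ∘ compIter (Fin.tail h) (Fin.tail n) := by
  rw [compIter, List.ofFn_succ]
  rfl

@[simp]
theorem compIter_zero (h : Fin k → Z → Z) : compIter h 0 = id := by
  induction k with
  | zero => rfl
  | succ k ih => rw [compIter_succ]; exact ih _

theorem isLocalHomeomorph_compIter [TopologicalSpace Z] {h : Fin k → Z → Z}
    (hh : ∀ i, IsLocalHomeomorph (h i)) (n : Fin k → ℕ) : IsLocalHomeomorph (compIter h n) := by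
  induction k with
  | zero => exact (Homeomorph.refl Z).isLocalHomeomorph
  | succ k ih => rw [compIter_succ]; exact ((hh 0).iterate (n 0)).comp (ih (fun i => hh i.succ) _)

theorem natCard_preimage_compIter_le {h : Fin k → Z → Z}
    (hfin : ∀ i j z, ((h i)^[j] ⁻¹' {z}).Finite) {n : Fin k → ℕ} {a : Fin k → ℝ}
    (ha : ∀ i z, (Nat.card ((h i)^[n i] ⁻¹' {z}) : ℝ) ≤ a i) (z : Z) :
    (Nat.card (compIter h n ⁻¹' {z}) : ℝ) ≤ ∏ i, a i := by
  induction k generalizing z with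
  | zero => simp [compIter]
  | succ k ih =>
    rw [compIter_succ, Fin.prod_univ_succ]
    exact natCard_preimage_comp_le (hfin 0 (n 0) z) (ha 0 z)
      (ih (fun i => hfin i.succ) (fun i => ha i.succ)) <|
      Finset.prod_nonneg fun i _ => (Nat.cast_nonneg _).trans (ha i.succ z)

theorem exists_natCard_preimage_compIter_le_exp [TopologicalSpace Z] [CompactSpace Z]
    {h : Fin k → Z → Z} (hh : ∀ i, IsLocalHomeomorph (h i)) {r : Fin k → ℝ} {β₀ : ℝ}
    (hβ₀ : ∀ i, betaC (h i) < β₀ * r i) :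
    ∃ C > 0, ∀ n z, (Nat.card (compIter h n ⁻¹' {z}) : ℝ) ≤ C * exp (β₀ * ∑ i, r i * n i) := by
  have hfin : ∀ i j z, ((h i)^[j] ⁻¹' {z}).Finite := fun i j =>
    ((hh i).iterate j).isLocallyInjective.finite_preimage_singleton
  have hexp : ∀ i, ∃ C > 0, ∀ j z, (Nat.card ((h i)^[j] ⁻¹' {z}) : ℝ) ≤ C * exp (β₀ * r i * j) :=
    fun i => by
      obtain ⟨N, hN⟩ := (hh i).isLocallyInjective.exists_natCard_preimage_le
      exact exists_natCard_preimage_iterate_le_mul_exp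
        (natCard_preimage_iterate_le (hfin i 1) (fun z => by exact_mod_cast hN z)) (hβ₀ i)
  choose C hC hCb using hexp
  refine ⟨∏ i, C i, Finset.prod_pos fun i _ => hC i, fun n z => ?_⟩
  refine (natCard_preimage_compIter_le hfin (fun i z => hCb i (n i) z) z).trans_eq ?_
  rw [Finset.prod_mul_distrib, ← exp_sum, Finset.mul_sum]
  simp_rw [mul_assoc]

end CompIter

section Series

theorem summable_prod_apply_of_nonneg {α : Type*} {k : ℕ} {f : Fin k → α → ℝ}
    (hf₀ : ∀ i a, 0 ≤ f i a) (hf : ∀ i, Summable (f i)) :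
    Summable fun x : Fin k → α => ∏ i, f i (x i) := by
  induction k with
  | zero => exact .of_finite
  | succ k ih =>
    refine (Fin.consEquiv fun _ => α).summable_iff.1 ?_
    simpa [Function.comp_def, Fin.prod_univ_succ] using
      (hf 0).mul_of_nonneg (ih (fun i => hf₀ i.succ) fun i => hf i.succ) (hf₀ 0)
        fun x => Finset.prod_nonneg fun i _ => hf₀ i.succ (x i)

theorem summable_exp_neg_sum_mul {k : ℕ} {r : Fin k → ℝ} (hr : ∀ i, 0 < r i) :
    Summable fun n : Fin k → ℕ => exp (-∑ i, r i * n i) := by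
  have hprod : ∀ n : Fin k → ℕ, exp (-∑ i, r i * n i) = ∏ i, exp (-r i) ^ n i := fun n => by
    rw [← Finset.sum_neg_distrib, exp_sum]
    exact Finset.prod_congr rfl fun i _ => by rw [← exp_nat_mul]; ring_nf
  simpa only [hprod] using summable_prod_apply_of_nonneg (fun i m => by positivity)
    fun i => summable_geometric_of_lt_one (exp_pos _).le (exp_lt_one_iff.2 (neg_lt_zero.2 (hr i)))

theorem sum_mul_natCast_pos {ι : Type*} [Fintype ι] {r : ι → ℝ} (hr : ∀ i, 0 < r i)
    {n : ι → ℕ} (hn : n ≠ 0) : 0 < ∑ i, r i * n i := by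
  obtain ⟨i, hi⟩ := Function.ne_iff.1 hn
  exact Finset.sum_pos' (fun j _ => mul_nonneg (hr j).le (n j).cast_nonneg)
    ⟨i, Finset.mem_univ i, mul_pos (hr i) (by exact_mod_cast Nat.pos_of_ne_zero hi)⟩

variable {s c C β₀ β : ℝ}

theorem abs_exp_neg_mul_mul_le (hs : 0 ≤ s) (hc : |c| ≤ C * exp (β₀ * s)) (hβ : β₀ + 1 ≤ β) :
    |exp (-(β * s)) * c| ≤ C * exp (-s) :=
  calc |exp (-(β * s)) * c| ≤ exp (-(β * s)) * (C * exp (β₀ * s)) := by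
        rw [abs_mul, abs_of_pos (exp_pos _)]; gcongr
    _ = C * exp (-s - (β - β₀ - 1) * s) := by rw [mul_left_comm, ← exp_add]; ring_nf
    _ ≤ C * exp (-s) := by
        have hC : 0 ≤ C := nonneg_of_mul_nonneg_left ((abs_nonneg c).trans hc) (exp_pos _)
        gcongr; nlinarith

end Series

section Tannery

variable {ι : Type*} {s c : ι → ℝ} {C β₀ : ℝ}

theorem abs_tsum_exp_neg_mul_mul_le (hs : ∀ i, 0 ≤ s i) (hsum : Summable fun i => exp (-s i))
    (hc : ∀ i, |c i| ≤ C * exp (β₀ * s i)) {β : ℝ} (hβ : β₀ + 1 ≤ β) :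
    |∑' i, exp (-(β * s i)) * c i| ≤ C * ∑' i, exp (-s i) := by
  rw [← tsum_mul_left]
  exact tsum_of_norm_bounded (hsum.mul_left C).hasSum fun i =>
    (Real.norm_eq_abs _).trans_le (abs_exp_neg_mul_mul_le (hs i) (hc i) hβ)

theorem tendsto_tsum_exp_neg_mul_mul {i₀ : ι} (hs₀ : s i₀ = 0) (hs : ∀ i ≠ i₀, 0 < s i)
    (hsum : Summable fun i => exp (-s i)) (hc : ∀ i, |c i| ≤ C * exp (β₀ * s i)) :
    Tendsto (fun β => ∑' i, exp (-(β * s i)) * c i) atTop (𝓝 (c i₀)) := by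
  classical
  have hs' : ∀ i, 0 ≤ s i := fun i => by
    rcases eq_or_ne i i₀ with rfl | hi
    exacts [hs₀.ge, (hs i hi).le]
  have hterm : ∀ i, Tendsto (fun β => exp (-(β * s i)) * c i) atTop
      (𝓝 (if i = i₀ then c i₀ else 0)) := fun i => by
    split_ifs with hi
    · subst hi; simp [hs₀]
    · simpa using ((tendsto_exp_neg_atTop_nhds_zero.comp
        (tendsto_id.atTop_mul_const (hs i hi))).mul_const (c i))
  simpa using tendsto_tsum_of_dominated_convergence (hsum.mul_left C) hterm <|
    (eventually_ge_atTop (β₀ + 1)).mono fun β hβ i =>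
      (Real.norm_eq_abs _).trans_le (abs_exp_neg_mul_mul_le (hs' i) (hc i) hβ)

end Tannery

theorem fbeta_tendsto_one_general {Z : Type*} [TopologicalSpace Z] [CompactSpace Z] [T2Space Z]
    [MeasurableSpace Z] [BorelSpace Z] {k : ℕ} (h : Fin k → Z → Z)
    (hlh : ∀ i, IsLocalHomeomorph (h i))
    (r : Fin k → ℝ) (hr : ∀ i, 0 < r i)
    (β₀ : ℝ) (hβ₀c : ∀ i, betaC (h i) < β₀ * r i) :
    (∀ z : Z,
      Filter.Tendsto
        (fun β : ℝ =>
          ∑' n : Fin k → ℕ,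
            Real.exp (-(β * ∑ i, r i * n i)) *
              (Nat.card ((compIter h n) ⁻¹' {z}) : ℝ))
        Filter.atTop (nhds 1)) ∧
    ∀ ε : Measure Z, IsProbabilityMeasure ε →
      Filter.Tendsto
        (fun β : ℝ =>
          ∫ z, (∑' n : Fin k → ℕ,
            Real.exp (-(β * ∑ i, r i * n i)) *
              (Nat.card ((compIter h n) ⁻¹' {z}) : ℝ)) ∂ε)
        Filter.atTop (nhds 1) := by
  obtain ⟨C, -, hC⟩ := exists_natCard_preimage_compIter_le_exp hlh hβ₀c
  set s : (Fin k → ℕ) → ℝ := fun n => ∑ i, r i * n i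
  have hc : ∀ z n, |(Nat.card (compIter h n ⁻¹' {z}) : ℝ)| ≤ C * exp (β₀ * s n) :=
    fun z n => (abs_of_nonneg (Nat.cast_nonneg _)).trans_le (hC n z)
  have hs₀ : s 0 = 0 := by simp [s]
  have hs_nonneg : ∀ n, 0 ≤ s n := fun n =>
    Finset.sum_nonneg fun i _ => mul_nonneg (hr i).le (n i).cast_nonneg
  have hsum : Summable fun n => exp (-s n) := summable_exp_neg_sum_mul hr
  have hpointwise : ∀ z, Tendsto (fun β => ∑' n : Fin k → ℕ,
      exp (-(β * s n)) * (Nat.card (compIter h n ⁻¹' {z}) : ℝ)) atTop (𝓝 1) := fun z => by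
    simpa using tendsto_tsum_exp_neg_mul_mul hs₀ (fun n => sum_mul_natCast_pos hr) hsum (hc z)
  refine ⟨hpointwise, fun ε _ => ?_⟩
  have hmeas : ∀ β : ℝ, Measurable fun z => ∑' n : Fin k → ℕ,
      exp (-(β * s n)) * (Nat.card (compIter h n ⁻¹' {z}) : ℝ) := fun β =>
    .tsum fun n => ((isLocalHomeomorph_compIter hlh n).measurable_natCard_preimage).const_mul _
  simpa using tendsto_integral_filter_of_dominated_convergence (μ := ε) _
    (.of_forall fun β => (hmeas β).aestronglyMeasurable)
    ((eventually_ge_atTop (β₀ + 1)).mono fun β hβ => ae_of_all _ fun z =>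
      (Real.norm_eq_abs _).trans_le (abs_tsum_exp_neg_mul_mul_le hs_nonneg hsum (hc z) hβ))
    (integrable_const (C * ∑' n, exp (-s n))) (ae_of_all _ hpointwise)

/-- `f_β(z) → 1` pointwise as `β → ∞`, and `∫ f_β dε → 1` for every
Borel probability measure `ε`. -/
theorem fbeta_tendsto_one {Z : Type*} [TopologicalSpace Z] [CompactSpace Z] [T2Space Z]
    [MeasurableSpace Z] [BorelSpace Z] {k : ℕ} (h : Fin k → Z → Z)
    (hlh : ∀ i, IsLocalHomeomorph (h i))
    (hsurj : ∀ i, Function.Surjective (h i))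
    (hcomm : ∀ i j : Fin k, (h i) ∘ (h j) = (h j) ∘ (h i))
    (r : Fin k → ℝ) (hr : ∀ i, 0 < r i)
    (β₀ : ℝ) (hβ₀ : 0 < β₀) (hβ₀c : ∀ i, betaC (h i) < β₀ * r i) :
    (∀ z : Z,
      Filter.Tendsto
        (fun β : ℝ =>
          ∑' n : Fin k → ℕ,
            Real.exp (-(β * ∑ i, r i * n i)) *
              (Nat.card ((compIter h n) ⁻¹' {z}) : ℝ))
        Filter.atTop (nhds 1)) ∧
    ∀ ε : Measure Z, IsProbabilityMeasure ε →
      Filter.Tendsto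
        (fun β : ℝ =>
          ∫ z, (∑' n : Fin k → ℕ,
            Real.exp (-(β * ∑ i, r i * n i)) *
              (Nat.card ((compIter h n) ⁻¹' {z}) : ℝ)) ∂ε)
        Filter.atTop (nhds 1) :=
  fbeta_tendsto_one_general h hlh r hr β₀ hβ₀c
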